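/- Let H₀ be a complex N_r × N_t matrix, H₂ a complex N_r × M̃ matrix, H₁ a complex M̃ × N_t matrix, and W a complex N_t × N_s matrix. Define f on complex M̃ × M̃ matrices by f(Θ) = Re(det(I + H̃(Θ) W Wᴴ H̃(Θ)ᴴ)), where H̃(Θ) = H₂ Θ H₁ + H₀. Then f is Fréchet differentiable over ℝ at every Θ, with derivative given by the real-linear map Δ ↦ 2 · Re(Tr(H₁ W Wᴴ H̃(Θ)ᴴ · adj(F) · H₂ · Δ)), where F = I + H̃(Θ) W Wᴴ H̃(Θ)ᴴ. Equivalently, the Euclidean gradient of f with respect to the real Frobenius inner product is 2 · H₂ᴴ adj(F) H̃(Θ) W Wᴴ H₁ᴴ. -/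

import Mathlib

open Matrix

attribute [local instance] Matrix.frobeniusNormedAddCommGroup Matrix.frobeniusNormedSpace

namespace GradAux

variable {n : ℕ}

/-- determinant as a continuous multilinear map in the rows -/
noncomputable def detCMM (n : ℕ) :
    ContinuousMultilinearMap ℂ (fun _ : Fin n => (Fin n → ℂ)) ℂ :=
  MultilinearMap.mkContinuous
    (Matrix.detRowAlternating (n := Fin n) (R := ℂ)).toMultilinearMap
    (n.factorial : ℝ) <| by
  intro m
  show ‖(Matrix.of m).det‖ ≤ _
  rw [Matrix.det_apply]
  refine (norm_sum_le _ _).trans ?_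
  have hterm : ∀ σ : Equiv.Perm (Fin n),
      ‖Equiv.Perm.sign σ • ∏ i, Matrix.of m (σ i) i‖ ≤ ∏ i, ‖m i‖ := by
    intro σ
    have h1 : ‖Equiv.Perm.sign σ • ∏ i, Matrix.of m (σ i) i‖
        = ‖∏ i, Matrix.of m (σ i) i‖ := by
      rcases Int.units_eq_one_or (Equiv.Perm.sign σ) with h | h <;> simp [h]
    rw [h1]
    rw [norm_prod]
    have h2 : ∀ i : Fin n, ‖Matrix.of m (σ i) i‖ ≤ ‖m (σ i)‖ := fun i =>
      norm_le_pi_norm (m (σ i)) i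
    calc ∏ i, ‖Matrix.of m (σ i) i‖ ≤ ∏ i, ‖m (σ i)‖ :=
          Finset.prod_le_prod (fun i _ => norm_nonneg _) (fun i _ => h2 i)
      _ = ∏ i, ‖m i‖ := Equiv.prod_comp σ (fun i => ‖m i‖)
  calc ∑ σ : Equiv.Perm (Fin n), ‖Equiv.Perm.sign σ • ∏ i, Matrix.of m (σ i) i‖
      ≤ ∑ _σ : Equiv.Perm (Fin n), ∏ i, ‖m i‖ := Finset.sum_le_sum fun σ _ => hterm σ
    _ = (n.factorial : ℝ) * ∏ i, ‖m i‖ := by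
        rw [Finset.sum_const, Finset.card_univ, Fintype.card_perm]
        simp [nsmul_eq_mul, Fintype.card_fin]

lemma detCMM_spec (m : Fin n → Fin n → ℂ) :
    detCMM n m = Matrix.detRowAlternating m := rfl

lemma sum_det_updateRow (A B : Matrix (Fin n) (Fin n) ℂ) :
    ∑ i, (A.updateRow i (B i)).det = (A.adjugate * B).trace := by
  have h : ∀ i, (A.updateRow i (B i)).det = ∑ j, A.adjugate j i * B i j := by
    intro i
    rw [← Matrix.cramer_transpose_apply, Matrix.cramer_eq_adjugate_mulVec]
    rw [← Matrix.adjugate_transpose]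
    simp [Matrix.mulVec, dotProduct, Matrix.transpose_apply]
  simp_rw [h]
  rw [Matrix.trace]
  simp only [Matrix.diag, Matrix.mul_apply]
  rw [Finset.sum_comm]

noncomputable def rowCLM (n : ℕ) (i : Fin n) :
    Matrix (Fin n) (Fin n) ℂ →L[ℂ] (Fin n → ℂ) :=
  LinearMap.toContinuousLinearMap
    { toFun := fun M => M i
      map_add' := fun _ _ => rfl
      map_smul' := fun _ _ => rfl }

noncomputable def detDerivCLM (A : Matrix (Fin n) (Fin n) ℂ) :
    Matrix (Fin n) (Fin n) ℂ →L[ℂ] ℂ :=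
  LinearMap.toContinuousLinearMap
    { toFun := fun Δ => (A.adjugate * Δ).trace
      map_add' := by intro x y; simp [Matrix.mul_add]
      map_smul' := by intro c x; simp [Matrix.mul_smul] }

@[simp] lemma detDerivCLM_apply (A Δ : Matrix (Fin n) (Fin n) ℂ) :
    detDerivCLM A Δ = (A.adjugate * Δ).trace := rfl

lemma hasFDerivAt_det (A : Matrix (Fin n) (Fin n) ℂ) :
    HasFDerivAt Matrix.det (detDerivCLM A) A := by
  have h := HasFDerivAt.multilinear_comp (detCMM n)
    (g := fun i (M : Matrix (Fin n) (Fin n) ℂ) => M i)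
    (g' := fun i => rowCLM n i) (x := A)
    (fun i => (rowCLM n i).hasFDerivAt)
  have hfun : (fun M : Matrix (Fin n) (Fin n) ℂ => detCMM n (fun i => M i))
      = Matrix.det := by
    funext M
    rw [detCMM_spec]
    rfl
  rw [hfun] at h
  refine h.congr_fderiv ?_
  ext Δ
  simp only [ContinuousLinearMap.coe_sum', Finset.sum_apply, ContinuousLinearMap.comp_apply,
    ContinuousMultilinearMap.toContinuousLinearMap_apply]
  have : ∀ i, detCMM n (Function.update (fun j => A j) i (rowCLM n i Δ))
      = (A.updateRow i (Δ i)).det := by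
    intro i
    rw [detCMM_spec]
    rfl
  refine (Finset.sum_congr rfl fun i _ => this i).trans ?_
  rw [sum_det_updateRow]
  rfl

section mul

variable {E : Type*} [NormedAddCommGroup E] [NormedSpace ℝ E]
variable {a b c : ℕ}

lemma isBoundedBilinearMap_matmul :
    IsBoundedBilinearMap ℝ
      (fun p : Matrix (Fin a) (Fin b) ℂ × Matrix (Fin b) (Fin c) ℂ => p.1 * p.2) where
  add_left := fun x₁ x₂ y => Matrix.add_mul x₁ x₂ y
  smul_left := fun r x y => Matrix.smul_mul r x y
  add_right := fun x y₁ y₂ => Matrix.mul_add x y₁ y₂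
  smul_right := fun r x y => Matrix.mul_smul x r y
  bound := ⟨1, one_pos, fun x y => by
    simpa using Matrix.frobenius_norm_mul x y⟩

lemma HasFDerivAt.matmul {f : E → Matrix (Fin a) (Fin b) ℂ}
    {g : E → Matrix (Fin b) (Fin c) ℂ}
    {f' : E →L[ℝ] Matrix (Fin a) (Fin b) ℂ} {g' : E →L[ℝ] Matrix (Fin b) (Fin c) ℂ} {x : E}
    (hf : HasFDerivAt f f' x) (hg : HasFDerivAt g g' x) :
    HasFDerivAt (fun y => f y * g y)
      ((isBoundedBilinearMap_matmul.deriv (f x, g x)).comp (f'.prod g')) x :=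
  by have h := (isBoundedBilinearMap_matmul.hasFDerivAt (f x, g x)).comp x (hf.prodMk hg); exact h

/-- conjugate transpose as a real-linear continuous map -/
noncomputable def ctCLM (a b : ℕ) :
    Matrix (Fin a) (Fin b) ℂ →L[ℝ] Matrix (Fin b) (Fin a) ℂ :=
  LinearMap.toContinuousLinearMap
    { toFun := fun M => Mᴴ
      map_add' := fun x y => Matrix.conjTranspose_add x y
      map_smul' := by
        intro r x
        ext i j
        simp [Matrix.conjTranspose_apply, star_smul] }

@[simp] lemma ctCLM_apply (M : Matrix (Fin a) (Fin b) ℂ) : ctCLM a b M = Mᴴ := rfl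

end mul

end GradAux

open GradAux

/-- Euclidean gradient of `Θ ↦ Re det(I + H̃(Θ) W Wᴴ H̃(Θ)ᴴ)` with
`H̃(Θ) = H₂ Θ H₁ + H₀` (Lemma 1, gradient w.r.t. `Θ_g`): the real Fréchet
derivative at `Θ` is `Δ ↦ 2 Re Tr(H₁ W Wᴴ H̃(Θ)ᴴ adj(F) H₂ Δ)` with
`F = I + H̃(Θ) W Wᴴ H̃(Θ)ᴴ`, i.e. the gradient is `2 H₂ᴴ adj(F) H̃(Θ) W Wᴴ H₁ᴴ`. -/
theorem euclidean_gradient_det_Theta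
    (Nr Nt Ns Mt : ℕ)
    (H₀ : Matrix (Fin Nr) (Fin Nt) ℂ)
    (H₂ : Matrix (Fin Nr) (Fin Mt) ℂ)
    (H₁ : Matrix (Fin Mt) (Fin Nt) ℂ)
    (W : Matrix (Fin Nt) (Fin Ns) ℂ)
    (Θ : Matrix (Fin Mt) (Fin Mt) ℂ) :
    ∃ L : Matrix (Fin Mt) (Fin Mt) ℂ →L[ℝ] ℝ,
      HasFDerivAt
        (fun X : Matrix (Fin Mt) (Fin Mt) ℂ =>
          ((1 + (H₂ * X * H₁ + H₀) * W * Wᴴ * (H₂ * X * H₁ + H₀)ᴴ).det).re)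
        L Θ ∧
      ∀ Δ : Matrix (Fin Mt) (Fin Mt) ℂ,
        L Δ = 2 * ((H₁ * W * Wᴴ * (H₂ * Θ * H₁ + H₀)ᴴ *
          (1 + (H₂ * Θ * H₁ + H₀) * W * Wᴴ * (H₂ * Θ * H₁ + H₀)ᴴ).adjugate *
          H₂ * Δ).trace).re := by
  classical
  -- the inner linear map X ↦ H₂ * X * H₁
  set uCLM : Matrix (Fin Mt) (Fin Mt) ℂ →L[ℝ] Matrix (Fin Nr) (Fin Nt) ℂ :=
    LinearMap.toContinuousLinearMap
      { toFun := fun X => H₂ * X * H₁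
        map_add' := by intro x y; simp [Matrix.mul_add, Matrix.add_mul]
        map_smul' := by intro r x; simp [Matrix.mul_smul, Matrix.smul_mul] } with huCLM
  have huCLM_apply : ∀ X, uCLM X = H₂ * X * H₁ := fun _ => rfl
  set G : Matrix (Fin Mt) (Fin Mt) ℂ → Matrix (Fin Nr) (Fin Nt) ℂ :=
    fun X => H₂ * X * H₁ + H₀ with hGdef
  have hG : HasFDerivAt G uCLM Θ := uCLM.hasFDerivAt.add_const H₀
  have hGH : HasFDerivAt (fun X => (G X)ᴴ) ((ctCLM Nr Nt).comp uCLM) Θ :=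
    ((ctCLM Nr Nt).hasFDerivAt.comp Θ hG : _)
  have h1 : HasFDerivAt (fun X => G X * W) _ Θ :=
    HasFDerivAt.matmul hG (hasFDerivAt_const W Θ)
  have h2 : HasFDerivAt (fun X => G X * W * Wᴴ) _ Θ :=
    HasFDerivAt.matmul h1 (hasFDerivAt_const Wᴴ Θ)
  have h3 : HasFDerivAt (fun X => G X * W * Wᴴ * (G X)ᴴ) _ Θ :=
    HasFDerivAt.matmul h2 hGH
  have hF : HasFDerivAt (fun X => 1 + G X * W * Wᴴ * (G X)ᴴ) _ Θ :=
    h3.const_add 1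
  set Fm : Matrix (Fin Nr) (Fin Nr) ℂ := 1 + G Θ * W * Wᴴ * (G Θ)ᴴ with hFm
  have hdet := ((hasFDerivAt_det Fm).restrictScalars ℝ).comp Θ hF
  have hre := (Complex.reCLM.hasFDerivAt).comp Θ hdet
  refine ⟨_, hre, ?_⟩
  intro Δ
  change ((Fm.adjugate * (G Θ * W * Wᴴ * (uCLM Δ)ᴴ + (G Θ * W * (0 : Matrix (Fin Ns) (Fin Nt) ℂ) + (G Θ * (0 : Matrix (Fin Nt) (Fin Ns) ℂ) + uCLM Δ * W) * Wᴴ) * (G Θ)ᴴ)).trace).re = _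
  simp only [ContinuousLinearMap.comp_apply, ContinuousLinearMap.coe_restrictScalars',
    ContinuousLinearMap.prod_apply, IsBoundedBilinearMap.deriv_apply,
    ContinuousLinearMap.zero_apply, Matrix.mul_zero, Matrix.zero_mul, zero_add, add_zero,
    detDerivCLM_apply, ctCLM_apply, Complex.reCLM_apply]
  rw [huCLM_apply]
  have hA : G Θ = H₂ * Θ * H₁ + H₀ := rfl
  set A := H₂ * Θ * H₁ + H₀ with hAdef
  rw [hA]
  set R := Fm.adjugate with hRdef
  have hFmH : Fmᴴ = Fm := by
    rw [hFm, hA]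
    simp only [Matrix.conjTranspose_add, Matrix.conjTranspose_mul, Matrix.conjTranspose_one,
      Matrix.conjTranspose_conjTranspose, Matrix.mul_assoc]
  have hRH : Rᴴ = R := by
    rw [hRdef, Matrix.adjugate_conjTranspose, hFmH]
  set T := H₁ * W * Wᴴ * Aᴴ * R * H₂ * Δ with hT
  have key1 : (R * (H₂ * Δ * H₁ * W * Wᴴ * Aᴴ)).trace = T.trace := by
    rw [show R * (H₂ * Δ * H₁ * W * Wᴴ * Aᴴ) = (R * H₂ * Δ) * (H₁ * W * Wᴴ * Aᴴ) by
      simp only [Matrix.mul_assoc], Matrix.trace_mul_comm]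
    simp only [hT, Matrix.mul_assoc]
  have key2 : (R * (A * W * Wᴴ * (H₂ * Δ * H₁)ᴴ)).trace = star T.trace := by
    rw [← Matrix.trace_conjTranspose]
    rw [show R * (A * W * Wᴴ * (H₂ * Δ * H₁)ᴴ)
        = (R * A * W * Wᴴ * H₁ᴴ) * (Δᴴ * H₂ᴴ) by
      simp only [Matrix.conjTranspose_mul, Matrix.mul_assoc], Matrix.trace_mul_comm]
    congr 1
    simp only [hT, Matrix.conjTranspose_mul, Matrix.conjTranspose_conjTranspose, hRH,
      Matrix.mul_assoc]
  rw [Matrix.mul_add, Matrix.trace_add, key1, key2]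
  simp only [Complex.add_re, Complex.conj_re]
  rw [show (star T.trace).re = T.trace.re from Complex.conj_re T.trace]
  ring
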